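/- Let $R$ be an $n\times n$ real symmetric positive definite matrix, $\lambda_z > 0$, $\tilde R = R + (n/\lambda_z) I_n$, $R_{z} = R - R \tilde R^{-1} R$, $r \in \mathbb{R}^n$, and $r_{z} = r - R\tilde R^{-1} r$. Then $r_{z}^T R_{z}^{-1} = r^T R^{-1}$. -/

import Mathlib

/-!
Write `T = R + c • 1` with `c = n / λ_z`. Since `T - R = c • 1`, both `1 - R T⁻¹` and `1 - T⁻¹ R`
equal `S := c • T⁻¹`, so `r_z = S r` and `R_z = R S`. Then `r_zᵀ R_z⁻¹ = rᵀ Sᵀ S⁻¹ R⁻¹`, and `S` is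
symmetric because `R` is.
-/

open Matrix

namespace Matrix

variable {ι K : Type*} [Fintype ι] [DecidableEq ι] [CommRing K]

theorem vecMul_mulVec_mul_inv_of_isSymm {S : Matrix ι ι K} (hS : S.IsSymm) (hS' : IsUnit S.det)
    (A : Matrix ι ι K) (r : ι → K) : (S *ᵥ r) ᵥ* (A * S)⁻¹ = r ᵥ* A⁻¹ := by
  rw [mul_inv_rev, vecMul_mulVec, hS.eq, ← mul_assoc, mul_nonsing_inv _ hS', one_mul]

section ShiftedResolvent

variable {A : Matrix ι ι K} {c : K}

theorem one_sub_mul_inv_add_smul_one (hT : IsUnit (A + c • 1).det) :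
    1 - A * (A + c • 1)⁻¹ = c • (A + c • 1)⁻¹ :=
  calc 1 - A * (A + c • 1)⁻¹ = (A + c • 1 - A) * (A + c • 1)⁻¹ := by
        rw [sub_mul, mul_nonsing_inv _ hT]
    _ = c • (A + c • 1)⁻¹ := by rw [add_sub_cancel_left, smul_mul, one_mul]

theorem one_sub_inv_add_smul_one_mul (hT : IsUnit (A + c • 1).det) :
    1 - (A + c • 1)⁻¹ * A = c • (A + c • 1)⁻¹ :=
  calc 1 - (A + c • 1)⁻¹ * A = (A + c • 1)⁻¹ * (A + c • 1 - A) := by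
        rw [mul_sub, nonsing_inv_mul _ hT]
    _ = c • (A + c • 1)⁻¹ := by rw [add_sub_cancel_left, Matrix.mul_smul, mul_one]

theorem sub_mulVec_inv_add_smul_one_mulVec (hT : IsUnit (A + c • 1).det) (r : ι → K) :
    r - A *ᵥ ((A + c • 1)⁻¹ *ᵥ r) = (c • (A + c • 1)⁻¹) *ᵥ r := by
  rw [← one_sub_mul_inv_add_smul_one hT, sub_mulVec, one_mulVec, mulVec_mulVec]

theorem sub_mul_inv_add_smul_one_mul (hT : IsUnit (A + c • 1).det) :
    A - A * (A + c • 1)⁻¹ * A = A * (c • (A + c • 1)⁻¹) := by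
  rw [← one_sub_inv_add_smul_one_mul hT, mul_sub, mul_one, mul_assoc]

theorem vecMul_sub_mulVec_inv_add_smul_one (hA : A.IsSymm) (hc : IsUnit c)
    (hT : IsUnit (A + c • 1).det) (r : ι → K) :
    (r - A *ᵥ ((A + c • 1)⁻¹ *ᵥ r)) ᵥ* (A - A * (A + c • 1)⁻¹ * A)⁻¹ = r ᵥ* A⁻¹ := by
  have hS : (c • (A + c • 1)⁻¹).IsSymm := ((hA.add (isSymm_one.smul c)).inv).smul c
  have hS' : IsUnit (c • (A + c • 1)⁻¹).det := by
    rw [det_smul, det_nonsing_inv]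
    exact (hc.pow _).mul hT.ringInverse
  rw [sub_mulVec_inv_add_smul_one_mulVec hT, sub_mul_inv_add_smul_one_mul hT,
    vecMul_mulVec_mul_inv_of_isSymm hS hS']

end ShiftedResolvent

end Matrix

theorem sgasp_noiseless_weights (n : ℕ) (hn : 0 < n) (R : Matrix (Fin n) (Fin n) ℝ)
    (hR : R.PosDef) (lamz : ℝ) (hlamz : 0 < lamz) (r : Fin n → ℝ) :
    Matrix.vecMul
        (r - R.mulVec ((R + ((n : ℝ) / lamz) • (1 : Matrix (Fin n) (Fin n) ℝ))⁻¹.mulVec r))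
        (R - R * (R + ((n : ℝ) / lamz) • (1 : Matrix (Fin n) (Fin n) ℝ))⁻¹ * R)⁻¹
      = Matrix.vecMul r R⁻¹ := by
  have hc : 0 < (n : ℝ) / lamz := div_pos (Nat.cast_pos.mpr hn) hlamz
  have hT : (R + ((n : ℝ) / lamz) • (1 : Matrix (Fin n) (Fin n) ℝ)).PosDef :=
    hR.add (PosDef.one.smul hc)
  exact vecMul_sub_mulVec_inv_add_smul_one (isHermitian_iff_isSymm.mp hR.isHermitian)
    hc.ne'.isUnit ((isUnit_iff_isUnit_det _).mp hT.isUnit) r
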